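/- arXiv:2205.00958 — 5 statements merged into one kernel-verified Lean document; each statement's English description precedes it below -/
import Mathlib

section
/- Let G be a finite group, p a prime, and P ≤ G an abelian radical p-subgroup. Then O_p(Z(C_G(P))) = P. -/
/-!
`Z = Z(C_G(P))` is abelian, contains `P` (as `P` is abelian) and centralizes it, so `P` is a normal
`p`-subgroup of `Z` and `P ≤ O_p(Z)`. Conversely `N_G(P)` normalizes `C_G(P)` and hence `Z`, so it
normalizes `O_p(Z)`; since `Z` is abelian, `O_p(Z)` is a `p`-group, and it lies in
`C_G(P) ≤ N_G(P)`. Thus `O_p(Z) ≤ O_p(N_G(P)) = P`.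
-/

/-- The subgroup of `G` generated by all subgroups of `N` that are `p`-groups and
are normalized by `N`, i.e. `O_p(N)`, the largest normal `p`-subgroup of `N`. -/
def relPCore (p : ℕ) {G : Type*} [Group G] (N : Subgroup G) : Subgroup G :=
  sSup {Q : Subgroup G | Q ≤ N ∧ IsPGroup p Q ∧ ∀ n ∈ N, ∀ x ∈ Q, n * x * n⁻¹ ∈ Q}

open Subgroup

section

variable {G : Type*} [Group G] {p : ℕ}

theorem IsPGroup.closure_of_commute {s : Set G} (hs : ∀ x ∈ s, ∃ k : ℕ, x ^ p ^ k = 1)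
    (hcomm : ∀ x ∈ s, ∀ y ∈ s, x * y = y * x) : IsPGroup p (closure s) := by
  have := isMulCommutative_closure hcomm
  rintro ⟨g, hg⟩
  suffices ∃ k : ℕ, g ^ p ^ k = 1 by simpa [← Subtype.coe_inj]
  induction hg using closure_induction with
  | mem x hx => exact hs x hx
  | one => exact ⟨0, one_pow _⟩
  | mul a b ha hb iha ihb =>
    obtain ⟨k, hk⟩ := iha
    obtain ⟨l, hl⟩ := ihb
    have hab : Commute a b := congrArg Subtype.val (mul_comm' (⟨a, ha⟩ : closure s) ⟨b, hb⟩)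
    refine ⟨k + l, ?_⟩
    rw [hab.mul_pow, pow_add, pow_mul, hk, one_pow, one_mul, mul_comm, pow_mul, hl, one_pow]
  | inv a _ iha =>
    obtain ⟨k, hk⟩ := iha
    exact ⟨k, by rw [inv_pow, hk, inv_one]⟩

section relPCore

variable (p) {N : Subgroup G}

theorem relPCore_le (N : Subgroup G) : relPCore p N ≤ N :=
  sSup_le fun _ hQ ↦ hQ.1

theorem le_relPCore {Q : Subgroup G} (hQN : Q ≤ N) (hQ : IsPGroup p Q)
    (hconj : ∀ n ∈ N, ∀ x ∈ Q, n * x * n⁻¹ ∈ Q) : Q ≤ relPCore p N :=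
  le_sSup ⟨hQN, hQ, hconj⟩

theorem map_relPCore_le {G' : Type*} [Group G'] (f : G →* G') :
    (relPCore p N).map f ≤ relPCore p (N.map f) := by
  rw [relPCore, (gc_map_comap f).l_sSup]
  refine iSup₂_le fun Q ⟨hQN, hQ, hconj⟩ ↦ le_relPCore p (map_mono hQN) (hQ.map f) ?_
  rintro - ⟨n, hn, rfl⟩ - ⟨x, hx, rfl⟩
  exact ⟨n * x * n⁻¹, hconj n hn x hx, by simp⟩

theorem conj_mem_relPCore {n x : G} (hn : n ∈ normalizer (N : Set G)) (hx : x ∈ relPCore p N) :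
    n * x * n⁻¹ ∈ relPCore p N := by
  have := map_relPCore_le p (N := N) (MulAut.conj n : G →* G)
  rw [mem_normalizer_iff_map_conj_eq.mp hn] at this
  exact this ⟨x, hx, rfl⟩

theorem isPGroup_relPCore_of_commute (hN : ∀ x ∈ N, ∀ y ∈ N, x * y = y * x) :
    IsPGroup p (relPCore p N) := by
  rw [relPCore, sSup_eq_iSup', iSup_eq_closure]
  refine IsPGroup.closure_of_commute ?_ ?_
  · simp only [Set.mem_iUnion]
    rintro x ⟨⟨Q, hQ⟩, hx⟩
    obtain ⟨k, hk⟩ := hQ.2.1 ⟨x, hx⟩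
    exact ⟨k, congrArg Subtype.val hk⟩
  · simp only [Set.mem_iUnion]
    rintro x ⟨⟨Q, hQ⟩, hx⟩ y ⟨⟨R, hR⟩, hy⟩
    exact hN x (hQ.1 hx) y (hR.1 hy)

end relPCore

theorem normalizer_le_normalizer_centralizer (s : Set G) :
    normalizer s ≤ normalizer (centralizer s : Set G) :=
  le_normalizer_of_normal_subgroupOf (centralizer_le_normalizer s)

end

theorem stmt1_general {G : Type*} [Group G] (p : ℕ)
    (P : Subgroup G) (hP : IsPGroup p P)
    (hab : ∀ x ∈ P, ∀ y ∈ P, x * y = y * x)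
    (hrad : relPCore p (Subgroup.normalizer (P : Set G)) = P) :
    relPCore p (Subgroup.centralizer (P : Set G) ⊓
      Subgroup.centralizer ((Subgroup.centralizer (P : Set G) : Subgroup G) : Set G)) = P := by
  set C := centralizer (P : Set G)
  set Z := C ⊓ centralizer (C : Set G)
  have hPZ : P ≤ Z := le_inf (fun x hx y hy ↦ hab y hy x hx) (le_centralizer_iff.mp le_rfl)
  have hZ_comm : ∀ x ∈ Z, ∀ y ∈ Z, x * y = y * x := fun x hx y hy ↦ hy.2 x hx.1
  have hZ_le : Z ≤ normalizer (P : Set G) := inf_le_left.trans (centralizer_le_normalizer _)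
  have hNP_le_NC : normalizer (P : Set G) ≤ normalizer (C : Set G) :=
    normalizer_le_normalizer_centralizer _
  have hN_le : normalizer (P : Set G) ≤ normalizer (Z : Set G) :=
    (le_inf hNP_le_NC (hNP_le_NC.trans (normalizer_le_normalizer_centralizer _))).trans
      inf_normalizer_le_normalizer_inf
  refine le_antisymm ?_ ?_
  · rw [← hrad]
    exact le_relPCore p ((relPCore_le p Z).trans hZ_le) (isPGroup_relPCore_of_commute p hZ_comm)
      fun n hn x hx ↦ conj_mem_relPCore p (hN_le hn) hx
  · refine le_relPCore p hPZ hP fun n hn x hx ↦ ?_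
    rwa [(hn.1 x hx).symm, mul_inv_cancel_right]

/-- If `P` is an abelian radical `p`-subgroup of a finite group `G`,
then `O_p(Z(C_G(P))) = P`, where `Z(C_G(P)) = C_G(P) ⊓ C_G(C_G(P))`. -/
theorem stmt1 {G : Type*} [Group G] [Finite G] (p : ℕ) (hp : p.Prime)
    (P : Subgroup G) (hP : IsPGroup p P)
    (hab : ∀ x ∈ P, ∀ y ∈ P, x * y = y * x)
    (hrad : relPCore p (Subgroup.normalizer (P : Set G)) = P) :
    relPCore p (Subgroup.centralizer (P : Set G) ⊓
      Subgroup.centralizer ((Subgroup.centralizer (P : Set G) : Subgroup G) : Set G)) = P :=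
  stmt1_general p P hP hab hrad
end

section
/- Let G be a finite group, Z ≤ Z(G) a central subgroup, and P a p-subgroup of G. If p does not divide |Z|, then the image of C_G(P) under the canonical epimorphism G → G/Z equals C_{G/Z}(PZ/Z). -/
/-- Let `Z ≤ Z(G)` be a central subgroup of the finite group `G` of order prime to `p`,
and `P` a `p`-subgroup of `G`. Then the image of `C_G(P)` in `G/Z` equals the
centralizer of the image of `P`. -/
theorem stmt3 {G : Type*} [Group G] [Finite G] (p : ℕ) (hp : p.Prime)
    (Z : Subgroup G) [Z.Normal] (hZ : Z ≤ Subgroup.center G)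
    (hZp : ¬ p ∣ Nat.card Z)
    (P : Subgroup G) (hP : IsPGroup p P) :
    Subgroup.map (QuotientGroup.mk' Z) (Subgroup.centralizer (P : Set G)) =
      Subgroup.centralizer ((Subgroup.map (QuotientGroup.mk' Z) P : Subgroup (G ⧸ Z)) : Set (G ⧸ Z)) := by
  apply le_antisymm
  · rintro - ⟨g, hg, rfl⟩
    rw [Subgroup.mem_centralizer_iff]
    rintro - ⟨x, hx, rfl⟩
    have := hg x hx
    simp only [QuotientGroup.mk'_apply, ← QuotientGroup.mk_mul, this]
  · intro gb hgb
    obtain ⟨g, rfl⟩ := QuotientGroup.mk'_surjective Z gb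
    refine ⟨g, ?_, rfl⟩
    rw [SetLike.mem_coe, Subgroup.mem_centralizer_iff]
    intro x hx
    have hcomm : ((x * g : G) : G ⧸ Z) = ((g * x : G) : G ⧸ Z) := by
      have := hgb (QuotientGroup.mk' Z x) ⟨x, hx, rfl⟩
      simpa using this
    set w : G := x⁻¹ * g⁻¹ * x * g with hw
    have hwZ : w ∈ Z := by
      rw [QuotientGroup.eq] at hcomm
      have h2 : g⁻¹ * x⁻¹ * g * x ∈ Z := by
        simpa [mul_assoc] using hcomm
      have := Z.inv_mem h2
      simpa [hw, mul_assoc] using this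
    have hwc : ∀ y : G, Commute w y :=
      fun y => (Subgroup.mem_center_iff.mp (hZ hwZ) y).symm
    obtain ⟨k, hk⟩ := hP ⟨x, hx⟩
    have hxk : x ^ (p ^ k) = 1 := by
      have := congrArg (Subgroup.subtype P) hk
      simpa using this
    have hconj : g⁻¹ * x * g = x * w := by
      rw [hw]; group
    have hwpow : w ^ (p ^ k) = 1 := by
      have h1 : (g⁻¹ * x * g) ^ (p ^ k) = g⁻¹ * x ^ (p ^ k) * g := by
        have := conj_pow (i := p ^ k) (a := g⁻¹) (b := x)
        simpa using this
      have h2 : (x * w) ^ (p ^ k) = x ^ (p ^ k) * w ^ (p ^ k) :=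
        ((hwc x).symm.mul_pow _)
      rw [hconj, h2, hxk] at h1
      simpa [hxk] using h1
    have hdvd1 : orderOf w ∣ p ^ k := orderOf_dvd_of_pow_eq_one hwpow
    have hdvd2 : orderOf w ∣ Nat.card Z := by
      have : orderOf (⟨w, hwZ⟩ : Z) ∣ Nat.card Z := orderOf_dvd_natCard _
      simpa [Subgroup.orderOf_mk] using this
    have hcop : Nat.Coprime (p ^ k) (Nat.card Z) :=
      (Nat.Prime.coprime_iff_not_dvd hp |>.mpr hZp).pow_left k
    have : orderOf w = 1 := Nat.eq_one_of_dvd_coprimes hcop hdvd1 hdvd2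
    have hw1 : w = 1 := orderOf_eq_one_iff.mp this
    have h : x⁻¹ * g⁻¹ * x * g = 1 := hw1
    calc x * g = (g * x) * (x⁻¹ * g⁻¹ * x * g) := by group
      _ = g * x := by rw [h, mul_one]
end

section
/- Let G be a finite group, Z ≤ Z(G), and P a p-subgroup of G containing O_p(Z). Then the image of N_G(P) in G/Z equals N_{G/Z}(PZ/Z). -/
/-!
If `gZ` normalizes `PZ/Z` and `x ∈ P`, then `g x g⁻¹ = y z` with `y ∈ P` and `z ∈ Z`. Since `z` is
central, `y` commutes with `g x g⁻¹`, so `z = y⁻¹ (g x g⁻¹)` is a product of commuting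
`p`-elements; being a `p`-element of `Z`, it lies in `O_p(Z) ≤ P`. Thus `g P g⁻¹ ≤ P`, and the same for `g⁻¹` gives `g ∈ N_G(P)`.
-/

open Subgroup QuotientGroup

theorem Commute.mul_pow_prime_pow_eq_one {G : Type*} [Monoid G] {p m n : ℕ} {a b : G}
    (h : Commute a b) (ha : a ^ p ^ m = 1) (hb : b ^ p ^ n = 1) :
    (a * b) ^ p ^ (m + n) = 1 := by
  rw [h.mul_pow, pow_add, pow_mul, ha, one_pow, one_mul, mul_comm, pow_mul, hb, one_pow]

section

variable {G : Type*} [Group G] {p : ℕ} {Z : Subgroup G} [Z.Normal] {P : Subgroup G}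

theorem mem_of_mk_mem_map_of_pow_prime_pow_eq_one (hp : p.Prime) (hZ : Z ≤ center G)
    (hP : IsPGroup p P) (hOpZ : ∀ z ∈ Z, (∃ n : ℕ, orderOf z = p ^ n) → z ∈ P)
    {x : G} (hx : ∃ n : ℕ, x ^ p ^ n = 1) (hxP : mk' Z x ∈ P.map (mk' Z)) : x ∈ P := by
  have := Fact.mk hp
  obtain ⟨y, hy, hyx⟩ := hxP
  have hz : y⁻¹ * x ∈ Z := QuotientGroup.eq.mp hyx
  have hzP : y⁻¹ * x ∈ P := by
    refine hOpZ _ hz (exists_orderOf_eq_prime_pow_iff.mpr ?_)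
    obtain ⟨m, hym⟩ := hP ⟨y, hy⟩
    obtain ⟨n, hxn⟩ := hx
    have hcomm : Commute y⁻¹ x := by
      have h := mem_center_iff.mp (hZ hz) y
      rw [mul_inv_cancel_left] at h
      exact (show Commute y x by rw [commute_iff_eq]; nth_rw 1 [h]; group).inv_left
    exact ⟨m + n, hcomm.mul_pow_prime_pow_eq_one (by simpa using congrArg Subtype.val hym) hxn⟩
  simpa using P.mul_mem hy hzP

theorem conj_mem_of_mk_mem_normalizer_map (hp : p.Prime) (hZ : Z ≤ center G)
    (hP : IsPGroup p P) (hOpZ : ∀ z ∈ Z, (∃ n : ℕ, orderOf z = p ^ n) → z ∈ P) {g : G}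
    (hg : mk' Z g ∈ normalizer (P.map (mk' Z) : Set (G ⧸ Z))) {x : G} (hx : x ∈ P) :
    g * x * g⁻¹ ∈ P := by
  refine mem_of_mk_mem_map_of_pow_prime_pow_eq_one hp hZ hP hOpZ ?_ ?_
  · obtain ⟨n, hn⟩ := hP ⟨x, hx⟩
    exact ⟨n, by rw [conj_pow, show x ^ p ^ n = 1 by simpa using congrArg Subtype.val hn,
      mul_one, mul_inv_cancel]⟩
  · simpa using (mem_normalizer_iff.mp hg (mk' Z x)).mp ⟨x, hx, rfl⟩

end

theorem stmt4_general {G : Type*} [Group G] (p : ℕ) (hp : p.Prime)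
    (Z : Subgroup G) [Z.Normal] (hZ : Z ≤ Subgroup.center G)
    (P : Subgroup G) (hP : IsPGroup p P)
    (hOpZ : ∀ z ∈ Z, (∃ n : ℕ, orderOf z = p ^ n) → z ∈ P) :
    Subgroup.map (QuotientGroup.mk' Z) (Subgroup.normalizer (P : Set G)) =
      Subgroup.normalizer ((Subgroup.map (QuotientGroup.mk' Z) P : Subgroup (G ⧸ Z)) : Set (G ⧸ Z)) := by
  refine le_antisymm (le_normalizer_map _) fun q hq ↦ ?_
  obtain ⟨g, rfl⟩ := mk'_surjective Z q
  have hconj {x : G} (hx : x ∈ P) : g * x * g⁻¹ ∈ P :=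
    conj_mem_of_mk_mem_normalizer_map hp hZ hP hOpZ hq hx
  have hconj_inv {x : G} (hx : x ∈ P) : g⁻¹ * x * g⁻¹⁻¹ ∈ P :=
    conj_mem_of_mk_mem_normalizer_map hp hZ hP hOpZ (by simpa using inv_mem hq) hx
  refine ⟨g, mem_normalizer_iff.mpr fun x ↦ ⟨hconj, fun hx ↦ ?_⟩, rfl⟩
  simpa [mul_assoc] using hconj_inv hx

/-- Let `Z ≤ Z(G)` and `P` a `p`-subgroup of `G` containing `O_p(Z)`
(i.e. containing every element of `Z` of `p`-power order).
Then the image of `N_G(P)` in `G/Z` equals the normalizer of the image of `P`. -/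
theorem stmt4 {G : Type*} [Group G] [Finite G] (p : ℕ) (hp : p.Prime)
    (Z : Subgroup G) [Z.Normal] (hZ : Z ≤ Subgroup.center G)
    (P : Subgroup G) (hP : IsPGroup p P)
    (hOpZ : ∀ z ∈ Z, (∃ n : ℕ, orderOf z = p ^ n) → z ∈ P) :
    Subgroup.map (QuotientGroup.mk' Z) (Subgroup.normalizer (P : Set G)) =
      Subgroup.normalizer ((Subgroup.map (QuotientGroup.mk' Z) P : Subgroup (G ⧸ Z)) : Set (G ⧸ Z)) :=
  stmt4_general p hp Z hZ P hP hOpZ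
end

section
/- Let G be a finite group, Z ≤ Z(G), and P a p-subgroup of G such that N_G(P)/Z = N_{G/Z}(PZ/Z) (i.e. the image of N_G(P) in G/Z is the full normalizer of the image of P). Then P is a radical p-subgroup of G if and only if PZ/Z is a radical p-subgroup of G/Z, provided O_p(Z) ≤ P. -/
open Pointwise

namespace Subgroup

variable {G : Type*} [Group G]

theorem le_normalizer_of_forall_conj_mem {N K : Subgroup G}
    (h : ∀ n ∈ N, ∀ x ∈ K, n * x * n⁻¹ ∈ K) : N ≤ normalizer (K : Set G) := by
  intro n hn
  refine mem_normalizer_iff.mpr fun x => ⟨h n hn x, fun hx => ?_⟩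
  simpa [mul_assoc] using h n⁻¹ (inv_mem hn) _ hx

theorem normalizer_le_normalizer_map_subtype {H : Subgroup G} (K : Subgroup H)
    [K.Characteristic] :
    normalizer (H : Set G) ≤ normalizer ((K.map H.subtype : Subgroup G) : Set G) := by
  intro g hg
  rw [mem_normalizer_iff_map_conj_eq] at hg ⊢
  let e : H ≃* H := ((MulAut.conj g).subgroupMap H).trans (MulEquiv.subgroupCongr hg)
  calc (K.map H.subtype).map (MulAut.conj g).toMonoidHom
      = (K.map e.toMonoidHom).map H.subtype := by
        rw [map_map, map_map]; rfl
    _ = K.map H.subtype := by rw [characteristic_iff_map_eq.mp ‹_› e]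

theorem le_of_le_sup_of_inf_sup_le {P Q Z : Subgroup G} [Z.Normal] (hQ : Q ≤ P ⊔ Z)
    (hZ : Z ⊓ (P ⊔ Q) ≤ P) : Q ≤ P := by
  intro q hq
  have hq' : q ∈ (P : Set G) * Z ∩ ↑(P ⊔ Q) := ⟨mul_normal P Z ▸ hQ hq, mem_sup_right hq⟩
  rw [← mul_inf_assoc P Z (P ⊔ Q) le_sup_left] at hq'
  obtain ⟨x, hx, z, hz, rfl⟩ := hq'
  exact mul_mem hx (hZ hz)

end Subgroup

section

variable {G K : Type*} [Group G] [Group K] {p : ℕ}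

open Subgroup

theorem relPCore_eq_iff {N P : Subgroup G} (hPN : P ≤ N) (hP : IsPGroup p P)
    (hNP : N ≤ normalizer (P : Set G)) :
    relPCore p N = P ↔
      ∀ Q : Subgroup G, Q ≤ N → IsPGroup p Q → N ≤ normalizer (Q : Set G) → Q ≤ P := by
  have conj_mem {Q : Subgroup G} (hNQ : N ≤ normalizer (Q : Set G)) :
      ∀ n ∈ N, ∀ x ∈ Q, n * x * n⁻¹ ∈ Q := fun n hn x => (mem_normalizer_iff.mp (hNQ hn) x).mp
  constructor
  · rintro h Q hQN hQ hNQ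
    exact h ▸ le_sSup ⟨hQN, hQ, conj_mem hNQ⟩
  · intro h
    refine le_antisymm (sSup_le ?_) (le_sSup ⟨hPN, hP, conj_mem hNP⟩)
    rintro Q ⟨hQN, hQ, hconj⟩
    exact h Q hQN hQ (le_normalizer_of_forall_conj_mem hconj)

theorem exists_isPGroup_le_map_eq_of_ker_le_center [Finite G] [Fact p.Prime] (f : G →* K)
    (hf : f.ker ≤ center G) (H : Subgroup G) (hH : IsPGroup p (H.map f)) :
    ∃ S ≤ H, IsPGroup p S ∧ normalizer (H : Set G) ≤ normalizer (S : Set G) ∧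
      S.map f = H.map f := by
  let g := f.subgroupMap H
  have hg : g.ker ≤ center H := fun x hx => mem_center_iff.mpr fun y =>
    Subtype.ext (mem_center_iff.mp (hf (congrArg Subtype.val hx)) y)
  have : Finite (H.map f) := Finite.of_surjective g (f.subgroupMap_surjective H)
  have := hH.isNilpotent
  have : Group.IsNilpotent H := Subgroup.isNilpotent_of_ker_le_center g hg
  obtain ⟨S⟩ : Nonempty (Sylow p H) := inferInstance
  -- `H` is nilpotent, so its Sylow `p`-subgroup is normal, hence unique and characteristic.
  have := Sylow.unique_of_normal S inferInstance
  have hS : (S : Subgroup H).map g = ⊤ :=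
    ((S.mapSurjective (f.subgroupMap_surjective H)).is_maximal' (hH.to_subgroup ⊤) le_top).symm
  refine ⟨S.map H.subtype, map_subtype_le _, S.isPGroup'.map _,
    normalizer_le_normalizer_map_subtype _, ?_⟩
  calc (S.map H.subtype).map f = ((S : Subgroup H).map g).map (H.map f).subtype := by
        rw [map_map, map_map]; rfl
    _ = H.map f := by rw [hS, ← MonoidHom.range_eq_map, range_subtype]

theorem relPCore_normalizer_map_eq [Finite G] [Fact p.Prime] (f : G →* K)
    (hf : f.ker ≤ center G) {P : Subgroup G} (hP : IsPGroup p P)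
    (hmap : (normalizer (P : Set G)).map f = normalizer ((P.map f : Subgroup K) : Set K))
    (hrad : relPCore p (normalizer (P : Set G)) = P) :
    relPCore p (normalizer ((P.map f : Subgroup K) : Set K)) = P.map f := by
  rw [relPCore_eq_iff le_normalizer hP le_rfl] at hrad
  rw [relPCore_eq_iff le_normalizer (hP.map f) le_rfl]
  intro Q hQN hQ hNQ
  have hcomap :
      (normalizer ((P.map f : Subgroup K) : Set K)).comap f = normalizer (P : Set G) := by
    rw [← hmap, comap_map_eq, sup_eq_left.mpr (hf.trans (center_le_normalizer _))]
  have hQ_range : Q ≤ f.range := hQN.trans (hmap ▸ map_le_range f _)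
  obtain ⟨S, hSQ, hS, hQS, hS_map⟩ :=
    exists_isPGroup_le_map_eq_of_ker_le_center f hf (Q.comap f)
      (by rwa [map_comap_eq_self hQ_range])
  have hSP : S ≤ P := hrad S (hSQ.trans (hcomap ▸ comap_mono hQN)) hS
    (hcomap ▸ (comap_mono hNQ).trans ((le_normalizer_comap f).trans hQS))
  rw [← map_comap_eq_self hQ_range, ← hS_map]
  exact map_mono hSP

theorem relPCore_normalizer_eq_of_map [Fact p.Prime] (f : G →* K) {P : Subgroup G}
    (hP : IsPGroup p P) (hker : ∀ z ∈ f.ker, (∃ n : ℕ, orderOf z = p ^ n) → z ∈ P)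
    (hmap : (normalizer (P : Set G)).map f = normalizer ((P.map f : Subgroup K) : Set K))
    (hrad : relPCore p (normalizer ((P.map f : Subgroup K) : Set K)) = P.map f) :
    relPCore p (normalizer (P : Set G)) = P := by
  rw [relPCore_eq_iff le_normalizer (hP.map f) le_rfl] at hrad
  rw [relPCore_eq_iff le_normalizer hP le_rfl]
  intro Q hQN hQ hNQ
  have hQP : Q.map f ≤ P.map f := hrad _ (hmap ▸ map_mono hQN) (hQ.map f)
    (hmap ▸ (map_mono hNQ).trans (le_normalizer_map f))
  have hPQ : IsPGroup p (P ⊔ Q : Subgroup G) := hP.to_sup_of_normal_left' hQ hQN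
  refine le_of_le_sup_of_inf_sup_le (map_le_map_iff.mp hQP) fun z ⟨hz_ker, hz⟩ =>
    hker z hz_ker ?_
  obtain ⟨n, hn⟩ := IsPGroup.iff_orderOf.mp hPQ ⟨z, hz⟩
  exact ⟨n, (orderOf_coe _).trans hn⟩

end

/-- Let `Z ≤ Z(G)`, and `P` a `p`-subgroup of `G` with `O_p(Z) ≤ P`, such that the image
of `N_G(P)` in `G/Z` is the full normalizer of the image of `P`. Then `P` is a radical
`p`-subgroup of `G` if and only if its image `PZ/Z` is a radical `p`-subgroup of `G/Z`. -/
theorem stmt5 {G : Type*} [Group G] [Finite G] (p : ℕ) (hp : p.Prime)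
    (Z : Subgroup G) [Z.Normal] (hZ : Z ≤ Subgroup.center G)
    (P : Subgroup G) (hP : IsPGroup p P)
    (hOpZ : ∀ z ∈ Z, (∃ n : ℕ, orderOf z = p ^ n) → z ∈ P)
    (hmap : Subgroup.map (QuotientGroup.mk' Z) (Subgroup.normalizer (P : Set G)) =
      Subgroup.normalizer ((Subgroup.map (QuotientGroup.mk' Z) P : Subgroup (G ⧸ Z)) : Set (G ⧸ Z))) :
    relPCore p (Subgroup.normalizer (P : Set G)) = P ↔
      relPCore p (Subgroup.normalizer ((Subgroup.map (QuotientGroup.mk' Z) P : Subgroup (G ⧸ Z)) : Set (G ⧸ Z))) =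
        Subgroup.map (QuotientGroup.mk' Z) P := by
  have : Fact p.Prime := ⟨hp⟩
  refine ⟨relPCore_normalizer_map_eq _ ?_ hP hmap, relPCore_normalizer_eq_of_map _ hP ?_ hmap⟩ <;>
    rwa [QuotientGroup.ker_mk']
end

section
/- Let A be a finite group with a central subgroup Z and a normal subgroup H such that |A| = |Z|·|H|. Let p be a prime dividing |Z| but not |Z(H)|, let P be the Sylow p-subgroup of Z, and let D be a cyclic p-subgroup of A containing P. Then D = P. -/
/-!
Take `g ∈ Z` of order `p`; it lies in `P`, hence in `D`, but not in `H`, since otherwise it would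
be an element of order `p` of `Z(H)`. The cyclic `p`-group `D` has a unique subgroup of order `p`,
namely `⟨g⟩`, so `D ⊓ H = ⊥`. Thus `D` embeds in `A ⧸ H`, of order `|Z|`, and `|D|` is bounded by
the `p`-part of `|Z|`, which is at most `|P|`.
-/

open Subgroup

open Finset in
theorem IsCyclic.mem_zpowers_of_pow_orderOf_eq_one {G : Type*} [Group G] [Finite G] [IsCyclic G]
    {x y : G} (hx : x ^ orderOf y = 1) : x ∈ zpowers y := by
  classical
  have := Fintype.ofFinite G
  let S : Finset G := {a | a ^ orderOf y = 1}
  have hsub : (zpowers y : Set G).toFinset ⊆ S := by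
    intro a ha
    obtain ⟨k, rfl⟩ := mem_zpowers_iff.mp (Set.mem_toFinset.mp ha)
    simp [S, zpow_pow_orderOf]
  have hcard : #S ≤ #(zpowers y : Set G).toFinset := by
    rw [Set.toFinset_card, ← Nat.card_eq_fintype_card, SetLike.coe_sort_coe, Nat.card_zpowers]
    exact IsCyclic.card_pow_eq_one_le (orderOf_pos y)
  have hxS : x ∈ S := by simpa [S] using hx
  rw [← Finset.eq_of_subset_of_card_le hsub hcard] at hxS
  simpa using hxS

namespace Subgroup

variable {A : Type*} [Group A] {p : ℕ}

theorem mem_zpowers_of_isCyclic {D : Subgroup A} [Finite D] [IsCyclic D] {x y : A}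
    (hxD : x ∈ D) (hyD : y ∈ D) (hxy : orderOf x = orderOf y) : x ∈ zpowers y := by
  have hx : (⟨x, hxD⟩ : D) ^ orderOf (⟨y, hyD⟩ : D) = 1 := by
    rw [orderOf_mk, ← hxy, Subtype.ext_iff, coe_pow, pow_orderOf_eq_one, coe_one]
  obtain ⟨k, hk⟩ := mem_zpowers_iff.mp (IsCyclic.mem_zpowers_of_pow_orderOf_eq_one hx)
  exact mem_zpowers_iff.mpr ⟨k, congrArg Subtype.val hk⟩

theorem inf_eq_bot_of_orderOf_eq_prime [Fact p.Prime] {D K : Subgroup A} [Finite D] [IsCyclic D]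
    (hD : IsPGroup p D) {g : A} (hgD : g ∈ D) (hg : orderOf g = p) (hgK : g ∉ K) :
    D ⊓ K = ⊥ := by
  by_contra hDK
  have : Finite (D ⊓ K : Subgroup A) := Finite.of_injective _ (inclusion_injective inf_le_left)
  have hp : p ∣ Nat.card (D ⊓ K : Subgroup A) :=
    ((hD.to_le inf_le_left).card_eq_or_dvd).resolve_left (mt card_eq_one.mp hDK)
  obtain ⟨t, ht⟩ := exists_prime_orderOf_dvd_card' (G := (D ⊓ K : Subgroup A)) p hp
  have htDK := t.2
  rw [mem_inf] at htDK
  have hgt : g ∈ zpowers (t : A) := mem_zpowers_of_isCyclic hgD htDK.1 (by rw [hg, orderOf_coe, ht])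
  exact hgK (zpowers_le.mpr htDK.2 hgt)

theorem card_dvd_index_of_inf_eq_bot {D H : Subgroup A} [H.Normal] (hDH : D ⊓ H = ⊥) :
    Nat.card D ∣ H.index := by
  rw [index_eq_card]
  refine card_dvd_of_injective ((QuotientGroup.mk' H).comp D.subtype) ?_
  rw [← MonoidHom.ker_eq_bot_iff, eq_bot_iff]
  intro x hx
  rw [MonoidHom.mem_ker, MonoidHom.comp_apply, QuotientGroup.mk'_apply,
    QuotientGroup.eq_one_iff] at hx
  have : (x : A) ∈ D ⊓ H := ⟨x.2, hx⟩
  rw [hDH, mem_bot] at this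
  exact mem_bot.mpr (Subtype.ext this)

variable {Z P : Subgroup A} (hPmax : ∀ Q : Subgroup A, Q ≤ Z → IsPGroup p Q → Q ≤ P)
include hPmax

theorem mem_of_orderOf_eq_prime_pow {g : A} {n : ℕ} (hgZ : g ∈ Z) (hg : orderOf g = p ^ n) :
    g ∈ P := by
  have hpg : IsPGroup p (zpowers g) := IsPGroup.of_card (by rw [Nat.card_zpowers, hg])
  exact hPmax _ (zpowers_le.mpr hgZ) hpg (mem_zpowers g)

theorem card_le_of_card_dvd_card [Finite A] [Fact p.Prime] {D : Subgroup A} (hD : IsPGroup p D)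
    (hDZ : Nat.card D ∣ Nat.card Z) : Nat.card D ≤ Nat.card P := by
  obtain ⟨k, hk⟩ := IsPGroup.iff_card.mp hD
  obtain ⟨S⟩ := Sylow.nonempty (p := p) (G := Z)
  calc Nat.card D ≤ Nat.card S :=
        Nat.le_of_dvd Nat.card_pos (hk ▸ S.pow_dvd_card_of_pow_dvd_card (hk ▸ hDZ))
    _ = Nat.card ((S : Subgroup Z).map Z.subtype) :=
        (card_map_of_injective Z.subtype_injective).symm
    _ ≤ Nat.card P := card_le_of_le (hPmax _ (map_subtype_le _) (S.isPGroup'.map _))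

end Subgroup

theorem stmt11_general (A : Type*) [Group A] [Finite A] (p : ℕ) (hp : p.Prime)
    (Z H : Subgroup A) (hZ : Z ≤ Subgroup.center A) [H.Normal]
    (hcard : Nat.card A = Nat.card Z * Nat.card H)
    (hpZ : p ∣ Nat.card Z)
    (hpZH : ¬ p ∣ Nat.card ↥(H ⊓ Subgroup.centralizer (H : Set A)))
    (P : Subgroup A)
    (hPmax : ∀ Q : Subgroup A, Q ≤ Z → IsPGroup p Q → Q ≤ P)
    (D : Subgroup A) (hDp : IsPGroup p D) (hDcyc : IsCyclic D) (hPD : P ≤ D) :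
    D = P := by
  have := Fact.mk hp
  obtain ⟨g, hg⟩ := exists_prime_orderOf_dvd_card' (G := Z) p hpZ
  have hgA : orderOf (g : A) = p := by rw [orderOf_coe, hg]
  have hgP : (g : A) ∈ P := mem_of_orderOf_eq_prime_pow hPmax g.2 (hgA.trans (pow_one p).symm)
  have hgH : (g : A) ∉ H := fun hgH => by
    have hgZH : (g : A) ∈ H ⊓ centralizer H := ⟨hgH, center_le_centralizer _ (hZ g.2)⟩
    have := orderOf_dvd_natCard (⟨g, hgZH⟩ : ↥(H ⊓ centralizer H))
    rw [orderOf_mk, hgA] at this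
    exact hpZH this
  have hDH : D ⊓ H = ⊥ := inf_eq_bot_of_orderOf_eq_prime hDp (hPD hgP) hgA hgH
  have hindex : H.index = Nat.card Z := by
    have := card_mul_index H
    rw [hcard, mul_comm] at this
    exact Nat.eq_of_mul_eq_mul_right Nat.card_pos this
  have hDZ : Nat.card D ∣ Nat.card Z := hindex ▸ card_dvd_index_of_inf_eq_bot hDH
  exact (eq_of_le_of_card_ge hPD (card_le_of_card_dvd_card hPmax hDp hDZ)).symm

/-- Let `A` be a finite group with a central subgroup `Z` and a normal subgroup `H` with
`|A| = |Z|·|H|`. Let `p` be a prime dividing `|Z|` but not `|Z(H)|`, let `P` be the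
Sylow `p`-subgroup of `Z`, and let `D` be a cyclic `p`-subgroup of `A` containing `P`.
Then `D = P`. -/
theorem stmt11 (A : Type*) [Group A] [Finite A] (p : ℕ) (hp : p.Prime)
    (Z H : Subgroup A) (hZ : Z ≤ Subgroup.center A) [H.Normal]
    (hcard : Nat.card A = Nat.card Z * Nat.card H)
    (hpZ : p ∣ Nat.card Z)
    (hpZH : ¬ p ∣ Nat.card ↥(H ⊓ Subgroup.centralizer (H : Set A)))
    (P : Subgroup A) (hPZ : P ≤ Z) (hPp : IsPGroup p P)
    (hPmax : ∀ Q : Subgroup A, Q ≤ Z → IsPGroup p Q → Q ≤ P)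
    (D : Subgroup A) (hDp : IsPGroup p D) (hDcyc : IsCyclic D) (hPD : P ≤ D) :
    D = P :=
  stmt11_general A p hp Z H hZ hcard hpZ hpZH P hPmax D hDp hDcyc hPD
end
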